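/- Let F : ℝ³ → ℝ³ be the right-hand side of the gauged bracket Bach flow (so F is homogeneous of degree 5: F(s·x) = s⁵·F(x) for all s ∈ ℝ, x ∈ ℝ³). Let T ∈ (0,∞], let x : [0,T) → ℝ³ be a differentiable solution of x' = F(x), let r : [0,∞) → ℝ be continuous, and let λ, τ : [0,∞) → ℝ be the solutions of the ODEs λ' = (1/2)·r·λ, λ(0) = 1, and τ' = λ⁴, τ(0) = 0. Then for every t ≥ 0 with τ(t) < T, the curve ν(t) := λ(t)·x(τ(t)) is differentiable at t and satisfies ν'(t) = F(ν(t)) + (1/2)·r(t)·ν(t). -/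
import Mathlib


/-- First component of the right-hand side `F` of the gauged bracket Bach flow. -/
noncomputable def Fa (a b c : ℝ) : ℝ :=
  -(a / 48) * (44*a^4 + 72*a^2*b^2 - 5*a^2*c^2 + 28*b^4 + 24*b^2*c^2 - 4*c^4)

/-- Second component of the right-hand side `F` of the gauged bracket Bach flow. -/
noncomputable def Fb (a b c : ℝ) : ℝ :=
  -(b / 48) * (60*a^4 + 104*a^2*b^2 + 57*a^2*c^2 + 44*b^4 + 104*b^2*c^2 + 60*c^4)

/-- Third component of the right-hand side `F` of the gauged bracket Bach flow. -/
noncomputable def Fc (a b c : ℝ) : ℝ :=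
  -(c / 48) * (-4*a^4 + 24*a^2*b^2 - 5*a^2*c^2 + 28*b^4 + 72*b^2*c^2 + 44*c^4)

/-- `(a,b,c) : ℝ → ℝ³` is a differentiable solution of the gauged bracket Bach
flow on the set `S ⊆ ℝ`. -/
def IsBachFlowSolution (a b c : ℝ → ℝ) (S : Set ℝ) : Prop :=
  ∀ t ∈ S,
    HasDerivAt a (Fa (a t) (b t) (c t)) t ∧
    HasDerivAt b (Fb (a t) (b t) (c t)) t ∧
    HasDerivAt c (Fc (a t) (b t) (c t)) t

/-- The right-hand side `F : ℝ³ → ℝ³` of the gauged bracket Bach flow. -/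
noncomputable def Fvec (p : ℝ × ℝ × ℝ) : ℝ × ℝ × ℝ :=
  (Fa p.1 p.2.1 p.2.2, Fb p.1 p.2.1 p.2.2, Fc p.1 p.2.1 p.2.2)

/-- `F` is homogeneous of degree `5`, and if `x` solves `x' = F(x)`
on `[0,T)`, `λ' = (1/2)·r·λ` with `λ(0) = 1` and `τ' = λ⁴` with `τ(0) = 0`, then
`ν(t) := λ(t)·x(τ(t))` solves the `r`-normalised flow `ν' = F(ν) + (1/2)·r·ν`. -/
theorem normalised_flow_reparam (T : EReal) (hT : 0 < T) (x : ℝ → ℝ × ℝ × ℝ)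
    (hx : ∀ t : ℝ, 0 ≤ t → (t : EReal) < T → HasDerivAt x (Fvec (x t)) t)
    (r lam tau : ℝ → ℝ) (hr : ContinuousOn r (Set.Ici 0))
    (hlam : ∀ t : ℝ, 0 ≤ t → HasDerivAt lam ((1/2) * r t * lam t) t)
    (hlam0 : lam 0 = 1)
    (htau : ∀ t : ℝ, 0 ≤ t → HasDerivAt tau (lam t ^ 4) t)
    (htau0 : tau 0 = 0) :
    (∀ (s : ℝ) (p : ℝ × ℝ × ℝ), Fvec (s • p) = s ^ 5 • Fvec p) ∧
    (∀ t : ℝ, 0 ≤ t → ((tau t : ℝ) : EReal) < T →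
      HasDerivAt (fun s => lam s • x (tau s))
        (Fvec (lam t • x (tau t)) + ((1/2) * r t) • (lam t • x (tau t))) t) := by
  have hhom : ∀ (s : ℝ) (p : ℝ × ℝ × ℝ), Fvec (s • p) = s ^ 5 • Fvec p := by
    rintro s ⟨a, b, c⟩
    simp only [Fvec, Prod.smul_mk, smul_eq_mul, Fa, Fb, Fc, Prod.mk.injEq]
    refine ⟨by ring, by ring, by ring⟩
  refine ⟨hhom, ?_⟩
  -- tau is monotone on [0,∞), hence nonnegative
  have htaumono : MonotoneOn tau (Set.Ici (0:ℝ)) := by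
    apply monotoneOn_of_deriv_nonneg (convex_Ici 0)
    · exact fun t ht => ((htau t ht).differentiableAt).continuousAt.continuousWithinAt
    · intro t ht
      rw [interior_Ici] at ht
      exact ((htau t ht.le).differentiableAt).differentiableWithinAt
    · intro t ht
      rw [interior_Ici] at ht
      rw [(htau t ht.le).deriv]
      positivity
  have htaunn : ∀ t : ℝ, 0 ≤ t → 0 ≤ tau t := by
    intro t ht
    have := htaumono (Set.self_mem_Ici) ht ht
    rwa [htau0] at this
  intro t ht hτT
  have hxd : HasDerivAt x (Fvec (x (tau t))) (tau t) := hx (tau t) (htaunn t ht) hτT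
  have hcomp : HasDerivAt (fun s => x (tau s)) (lam t ^ 4 • Fvec (x (tau t))) t :=
    hxd.scomp t (htau t ht)
  have h := (hlam t ht).smul hcomp
  have heq : Fvec (lam t • x (tau t)) + ((1/2) * r t) • (lam t • x (tau t))
      = lam t • lam t ^ 4 • Fvec (x (tau t)) + ((1/2) * r t * lam t) • x (tau t) := by
    rw [hhom, smul_smul, smul_smul]
    congr 2 <;> ring
  rw [heq]
  exact h
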